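/- arXiv:2211.12747 — 4 statements merged into one kernel-verified Lean document; each statement's English description precedes it below -/
import Mathlib

section
/- Let 0 < ε ≤ 1/10 and let A be a (1/4+ε, ∨)-dense reduced hypergraph with index set [M]. Then for any i < j < k in [M], we have ∑_{v ∈ P^{ik}} d_{Q^i_{jk}}(v)·d_{Q^k_{ij}}(v) ≥ (1/4 + ε/2)·|P^{ij}||P^{jk}||P^{ik}|. -/
/-!
Fix `v ∈ P^{ik}` and count the edges `wvu` of `A^{ijk}` through it. By the definition of
the graphs `Q`, those with `w` not a `Q^i_{jk}`-neighbour of `v` number at most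
`ε² |P^{ij}| |P^{jk}|`, and so do those with `u` not a `Q^k_{ij}`-neighbour of `v`; all others
lie in a product of the two neighbourhoods, of size `d_{Q^i_{jk}}(v) d_{Q^k_{ij}}(v)`. Summing
over `v` and comparing with the density `1/4 + ε` leaves the claim, since `2ε² ≤ ε/2` for
`0 ≤ ε ≤ 1/4`.
-/

open scoped Classical

/-- A reduced hypergraph with index set `Fin M`: pairwise disjoint nonempty finite
vertex classes `P i j` (for `i ≠ j`, with `P i j = P j i`), and an edge set `E`
which is the union of the edge sets of the constituents, i.e. every edge consists
of one vertex from each of `P i j`, `P i k`, `P j k` for some `i < j < k`. -/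
structure ReducedHypergraph (M : ℕ) where
  P : Fin M → Fin M → Finset ℕ
  P_symm : ∀ i j, P i j = P j i
  P_nonempty : ∀ i j, i ≠ j → (P i j).Nonempty
  P_disjoint : ∀ i j k l : Fin M, i ≠ j → k ≠ l →
    ({i, j} : Finset (Fin M)) ≠ {k, l} → Disjoint (P i j) (P k l)
  E : Finset (Finset ℕ)
  mem_E : ∀ e ∈ E, ∃ i j k : Fin M, i < j ∧ j < k ∧
    ∃ a ∈ P i j, ∃ b ∈ P i k, ∃ c ∈ P j k, e = {a, b, c}

namespace ReducedHypergraph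

variable {M : ℕ}

/-- The edges of the constituent `A^{ijk}`, recorded as triples in
`P i j × P i k × P j k`. -/
def conEdges (A : ReducedHypergraph M) (i j k : Fin M) : Finset (ℕ × ℕ × ℕ) :=
  (A.P i j ×ˢ A.P i k ×ˢ A.P j k).filter
    (fun t => ({t.1, t.2.1, t.2.2} : Finset ℕ) ∈ A.E)

/-- `A` is `(d, ∨)`-dense: every constituent `A^{ijk}` has at least
`d * |P^{ij}| * |P^{ik}| * |P^{jk}|` edges. -/
def IsVeeDense (A : ReducedHypergraph M) (d : ℝ) : Prop :=
  ∀ i j k : Fin M, i < j → j < k →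
    d * ((A.P i j).card : ℝ) * ((A.P i k).card : ℝ) * ((A.P j k).card : ℝ) ≤
      ((A.conEdges i j k).card : ℝ)

/-- Adjacency in the bipartite graph `Q^a_{bc}` (with parameter `ε`): `w ∈ P a b`
is joined to `v ∈ P a c` if at least `ε² * |P b c|` vertices `u ∈ P b c` satisfy
`{w, v, u} ∈ E`. -/
def Qadj (A : ReducedHypergraph M) (ε : ℝ) (a b c : Fin M) (w v : ℕ) : Prop :=
  w ∈ A.P a b ∧ v ∈ A.P a c ∧
    ε ^ 2 * ((A.P b c).card : ℝ) ≤
      (((A.P b c).filter (fun u => ({w, v, u} : Finset ℕ) ∈ A.E)).card : ℝ)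

/-- The degree in `Q^a_{bc}` of a vertex `v` on the `P a c` side, i.e. the number
of its neighbours in `P a b`. -/
noncomputable def degQ (A : ReducedHypergraph M) (ε : ℝ) (a b c : Fin M) (v : ℕ) : ℕ :=
  ((A.P a b).filter (fun w => A.Qadj ε a b c w v)).card

/-- The degree in `Q^a_{bc}` of a vertex `w` on the `P a b` side, i.e. the number
of its neighbours in `P a c`. -/
noncomputable def degQrev (A : ReducedHypergraph M) (ε : ℝ) (a b c : Fin M) (w : ℕ) : ℕ :=
  ((A.P a c).filter (fun v => A.Qadj ε a b c w v)).card

/-- The set `S^i_{jk}(r)` (with parameters `ε, δ`): vertices `x ∈ P i k` whose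
degree in `Q^i_{jk}` is at least `(1/2 + r δ) * |P i j|`. -/
noncomputable def Sset (A : ReducedHypergraph M) (ε δ : ℝ) (i j k : Fin M) (r : ℕ) :
    Finset ℕ :=
  (A.P i k).filter (fun x => ((1 : ℝ) / 2 + (r : ℝ) * δ) * ((A.P i j).card : ℝ) ≤
    (A.degQ ε i j k x : ℝ))

/-- Condition (⋆) for parameters `ε, δ, r*`: every `i < j < k` satisfies
`∑_{v ∈ P^{ik}} d_{Q^i_{jk}}(v)² ≥ (1/4 + ε/2) |P^{ij}|² |P^{ik}|` and
`|S^i_{jk}(r*)| ≥ δ |P^{ik}| > |S^i_{jk}(r*+1)|`. -/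
def StarCond (A : ReducedHypergraph M) (ε δ : ℝ) (rstar : ℕ) : Prop :=
  ∀ i j k : Fin M, i < j → j < k →
    ((1 / 4 + ε / 2) * ((A.P i j).card : ℝ) ^ 2 * ((A.P i k).card : ℝ) ≤
      ∑ v ∈ A.P i k, ((A.degQ ε i j k v : ℝ)) ^ 2) ∧
    δ * ((A.P i k).card : ℝ) ≤ ((A.Sset ε δ i j k rstar).card : ℝ) ∧
    ((A.Sset ε δ i j k (rstar + 1)).card : ℝ) < δ * ((A.P i k).card : ℝ)

end ReducedHypergraph

namespace Finset

theorem sum_card_bipartiteAbove_le {α β : Type*} (r : α → β → Prop)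
    [∀ x y, Decidable (r x y)] {s : Finset α} {t : Finset β} (p : α → Prop) (q : β → Prop)
    [DecidablePred p] [DecidablePred q] {a b : ℝ} (ha : 0 ≤ a) (hb : 0 ≤ b)
    (hp : ∀ x ∈ s, ¬ p x → (#(t.bipartiteAbove r x) : ℝ) ≤ a * #t)
    (hq : ∀ y ∈ t, ¬ q y → (#(s.bipartiteBelow r y) : ℝ) ≤ b * #s) :
    ∑ x ∈ s, (#(t.bipartiteAbove r x) : ℝ) ≤
      #{x ∈ s | p x} * #{y ∈ t | q y} + (a + b) * #s * #t := by
  set s' := {x ∈ s | p x}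
  have hbad : ∑ x ∈ s with ¬ p x, (#(t.bipartiteAbove r x) : ℝ) ≤ a * #s * #t :=
    calc _ ≤ ∑ x ∈ s with ¬ p x, a * #t := sum_le_sum fun x hx => hp x
              (mem_filter.1 hx).1 (mem_filter.1 hx).2
      _ ≤ ∑ _x ∈ s, a * #t := sum_le_sum_of_subset_of_nonneg (filter_subset _ _)
              fun _ _ _ => by positivity
      _ = a * #s * #t := by rw [sum_const, nsmul_eq_mul]; ring
  have hgood_split : ∑ x ∈ s', (#(t.bipartiteAbove r x) : ℝ) =
      ∑ y ∈ t with q y, (#(s'.bipartiteBelow r y) : ℝ) +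
        ∑ y ∈ t with ¬ q y, (#(s'.bipartiteBelow r y) : ℝ) := by
    rw [sum_filter_add_sum_filter_not]
    exact_mod_cast sum_card_bipartiteAbove_eq_sum_card_bipartiteBelow r
  have hgood_q : ∑ y ∈ t with q y, (#(s'.bipartiteBelow r y) : ℝ) ≤
      #{y ∈ t | q y} * #s' := by
    rw [← nsmul_eq_mul]
    refine sum_le_card_nsmul _ _ _ fun y _ => ?_
    exact_mod_cast card_le_card (filter_subset _ _)
  have hgood_not_q : ∑ y ∈ t with ¬ q y, (#(s'.bipartiteBelow r y) : ℝ) ≤ b * #s * #t :=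
    calc _ ≤ ∑ y ∈ t with ¬ q y, b * #s := sum_le_sum fun y hy => by
              refine le_trans ?_ (hq y (mem_filter.1 hy).1 (mem_filter.1 hy).2)
              exact Nat.cast_le.2 (card_le_card (filter_subset_filter _ (filter_subset _ _)))
      _ ≤ ∑ _y ∈ t, b * #s := sum_le_sum_of_subset_of_nonneg (filter_subset _ _)
              fun _ _ _ => by positivity
      _ = b * #s * #t := by rw [sum_const, nsmul_eq_mul]; ring
  rw [← sum_filter_add_sum_filter_not s p]
  linarith

end Finset

namespace ReducedHypergraph

open Finset

variable {M : ℕ} (A : ReducedHypergraph M)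

-- Reducible, so that filters along it use the same decidability instance as `Qadj`.
abbrev link (v w u : ℕ) : Prop := ({w, v, u} : Finset ℕ) ∈ A.E

theorem card_conEdges (i j k : Fin M) :
    #(A.conEdges i j k) =
      ∑ v ∈ A.P i k, ∑ w ∈ A.P i j, #((A.P j k).bipartiteAbove (A.link v) w) := by
  simp only [conEdges, card_filter, sum_product, bipartiteAbove, link]
  exact sum_comm

theorem sum_card_link_le (ε : ℝ) {i j k : Fin M} {v : ℕ} (hv : v ∈ A.P i k) :
    ∑ w ∈ A.P i j, (#((A.P j k).bipartiteAbove (A.link v) w) : ℝ) ≤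
      A.degQ ε i j k v * A.degQrev ε k i j v + 2 * ε ^ 2 * #(A.P i j) * #(A.P j k) := by
  have h := sum_card_bipartiteAbove_le (A.link v) (s := A.P i j) (t := A.P j k)
    (fun w => A.Qadj ε i j k w v) (fun u => A.Qadj ε k i j v u) (sq_nonneg ε) (sq_nonneg ε)
    ?_ ?_
  · rw [degQ, degQrev, A.P_symm k j]
    linarith
  · intro w hw hQ
    exact le_of_lt (not_le.1 fun h => hQ ⟨hw, hv, h⟩)
  · intro u hu hQ
    have hlink : (A.P i j).bipartiteBelow (A.link v) u =
        {w ∈ A.P i j | ({v, u, w} : Finset ℕ) ∈ A.E} :=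
      filter_congr fun w _ => by rw [link, pair_comm u w, insert_comm v w]
    refine le_of_lt (not_le.1 fun h => hQ ⟨A.P_symm k i ▸ hv, A.P_symm k j ▸ hu, ?_⟩)
    rwa [hlink] at h

end ReducedHypergraph

open ReducedHypergraph in
/-- Lemma (sum of products of degrees): if `0 < ε ≤ 1/10` and `A` is a
`(1/4 + ε, ∨)`-dense reduced hypergraph with index set `[M]`, then for any
`i < j < k`, `∑_{v ∈ P^{ik}} d_{Q^i_{jk}}(v) · d_{Q^k_{ij}}(v) ≥
(1/4 + ε/2) |P^{ij}| |P^{jk}| |P^{ik}|`. -/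
theorem sum_deg_products {M : ℕ} (ε : ℝ) (hε0 : 0 < ε) (hε1 : ε ≤ 1 / 10)
    (A : ReducedHypergraph M) (hA : A.IsVeeDense (1 / 4 + ε))
    (i j k : Fin M) (hij : i < j) (hjk : j < k) :
    (1 / 4 + ε / 2) * ((A.P i j).card : ℝ) * ((A.P j k).card : ℝ) *
        ((A.P i k).card : ℝ) ≤
      ∑ v ∈ A.P i k, (A.degQ ε i j k v : ℝ) * (A.degQrev ε k i j v : ℝ) := by
  have hlinks : ((A.conEdges i j k).card : ℝ) ≤ ∑ v ∈ A.P i k,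
      ((A.degQ ε i j k v : ℝ) * A.degQrev ε k i j v +
        2 * ε ^ 2 * (A.P i j).card * (A.P j k).card) := by
    rw [card_conEdges]
    push_cast
    exact Finset.sum_le_sum fun v hv => A.sum_card_link_le ε hv
  rw [Finset.sum_add_distrib, Finset.sum_const, nsmul_eq_mul] at hlinks
  have hε : 2 * ε ^ 2 ≤ ε / 2 := by nlinarith
  have hsizes : (0 : ℝ) ≤ (A.P i j).card * (A.P i k).card * (A.P j k).card := by positivity
  linarith [hA i j k hij hjk, mul_le_mul_of_nonneg_right hε hsizes]
end

section
/- Let 0 < ε ≤ 1/10 and let A be a (1/4+ε, ∨)-dense reduced hypergraph with index set [M]. Then for any i < j < k in [M], at least one of the following holds: ∑_{v ∈ P^{ik}} d_{Q^i_{jk}}(v)² ≥ (1/4 + ε/2)·|P^{ij}|²|P^{ik}|, or ∑_{v ∈ P^{ik}} d_{Q^k_{ij}}(v)² ≥ (1/4 + ε/2)·|P^{jk}|²|P^{ik}|. -/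
open scoped Classical

/-!
Fix `v ∈ P^{ik}` and count the pairs `(w, u) ∈ P^{ij} × P^{jk}` with `{w, v, u}` an edge. Pairs
whose `w` is not a `Q^i_{jk}`-neighbour of `v`, or whose `u` is not a `Q^k_{ij}`-neighbour of `v`,
number at most `2ε²|P^{ij}||P^{jk}|`; the rest lie in a product of the two neighbourhoods. Summing
over `v`, density gives `∑_v d₁(v) d₂(v) ≥ (1/4 + ε - 2ε²)|P^{ij}||P^{jk}||P^{ik}|`, and
`1/4 + ε - 2ε² ≥ 1/4 + ε/2` for `ε ≤ 1/4`. By AM-GM,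
`2 d₁ d₂ |P^{ij}||P^{jk}| ≤ d₁²|P^{jk}|² + d₂²|P^{ij}|²`, so one of the two square sums is large.
-/

open Finset

namespace Finset

variable {ι α β : Type*}

theorem sum_filter_not_le_le_mul_card (s : Finset ι) (f : ι → ℕ) {a : ℝ} (ha : 0 ≤ a) :
    ∑ x ∈ s with ¬ a ≤ f x, (f x : ℝ) ≤ a * #s := by
  calc ∑ x ∈ s with ¬ a ≤ f x, (f x : ℝ)
      ≤ #{x ∈ s | ¬ a ≤ f x} • a :=
        sum_le_card_nsmul _ _ _ fun x hx => (not_le.1 (mem_filter.1 hx).2).le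
    _ ≤ a * #s := by
      rw [nsmul_eq_mul, mul_comm]
      exact mul_le_mul_of_nonneg_left (by exact_mod_cast card_filter_le _ _) ha

variable (r : α → β → Prop) [∀ x y, Decidable (r x y)] (s : Finset α) (t : Finset β)

theorem sum_card_bipartiteAbove_le_card_mul_card_add {a b : ℝ} (ha : 0 ≤ a) (hb : 0 ≤ b) :
    ∑ x ∈ s, (#(t.bipartiteAbove r x) : ℝ) ≤
      #{x ∈ s | a ≤ #(t.bipartiteAbove r x)} * #{y ∈ t | b ≤ #(s.bipartiteBelow r y)} +
        a * #s + b * #t := by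
  set H := {y ∈ t | b ≤ #(s.bipartiteBelow r y)}
  set t' := {y ∈ t | ¬ b ≤ #(s.bipartiteBelow r y)}
  have heavy_rows : ∑ x ∈ s with a ≤ #(t.bipartiteAbove r x), #(t.bipartiteAbove r x) ≤
      #{x ∈ s | a ≤ #(t.bipartiteAbove r x)} * #H + ∑ y ∈ t', #(s.bipartiteBelow r y) := by
    calc ∑ x ∈ s with a ≤ #(t.bipartiteAbove r x), #(t.bipartiteAbove r x)
        ≤ ∑ x ∈ s with a ≤ #(t.bipartiteAbove r x), (#H + #(t'.bipartiteAbove r x)) := by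
          refine sum_le_sum fun x _ => (card_le_card fun y hy => ?_).trans (card_union_le _ _)
          rw [mem_bipartiteAbove r] at hy
          by_cases hyH : b ≤ #(s.bipartiteBelow r y)
          · exact mem_union_left _ (mem_filter.2 ⟨hy.1, hyH⟩)
          · exact mem_union_right _ ((mem_bipartiteAbove r).2 ⟨mem_filter.2 ⟨hy.1, hyH⟩, hy.2⟩)
      _ ≤ #{x ∈ s | a ≤ #(t.bipartiteAbove r x)} * #H + ∑ x ∈ s, #(t'.bipartiteAbove r x) := by
          rw [sum_add_distrib, sum_const, smul_eq_mul]
          exact Nat.add_le_add_left (sum_le_sum_of_subset (filter_subset _ _)) _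
      _ = _ := by
          rw [sum_card_bipartiteAbove_eq_sum_card_bipartiteBelow]
  have light_cols := sum_filter_not_le_le_mul_card t (fun y => #(s.bipartiteBelow r y)) hb
  have light_rows := sum_filter_not_le_le_mul_card s (fun x => #(t.bipartiteAbove r x)) ha
  have heavy_rows' : ∑ x ∈ s with a ≤ #(t.bipartiteAbove r x), (#(t.bipartiteAbove r x) : ℝ) ≤
      #{x ∈ s | a ≤ #(t.bipartiteAbove r x)} * #H + ∑ y ∈ t', (#(s.bipartiteBelow r y) : ℝ) := by
    exact_mod_cast heavy_rows
  rw [← sum_filter_add_sum_filter_not s (fun x => a ≤ #(t.bipartiteAbove r x))]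
  linarith

end Finset

theorem le_sum_sq_or_le_sum_sq_of_le_sum_mul {ι : Type*} (s : Finset ι) (f g : ι → ℝ)
    {S T c : ℝ} (hS : 0 < S) (hT : 0 < T) (h : c * S * T * #s ≤ ∑ x ∈ s, f x * g x) :
    c * S ^ 2 * #s ≤ ∑ x ∈ s, f x ^ 2 ∨ c * T ^ 2 * #s ≤ ∑ x ∈ s, g x ^ 2 := by
  by_contra! ⟨hf, hg⟩
  have amgm : 2 * S * T * ∑ x ∈ s, f x * g x ≤
      T ^ 2 * ∑ x ∈ s, f x ^ 2 + S ^ 2 * ∑ x ∈ s, g x ^ 2 := by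
    simp only [mul_sum, ← sum_add_distrib]
    exact sum_le_sum fun x _ => by nlinarith [sq_nonneg (f x * T - g x * S)]
  nlinarith [mul_lt_mul_of_pos_left hf (pow_pos hT 2), mul_lt_mul_of_pos_left hg (pow_pos hS 2),
    mul_pos hS hT]

namespace ReducedHypergraph

variable {M : ℕ} (A : ReducedHypergraph M)

theorem card_conEdges_eq_sum (i j k : Fin M) :
    #(A.conEdges i j k) = ∑ v ∈ A.P i k, ∑ w ∈ A.P i j,
      #((A.P j k).bipartiteAbove (fun w u => ({w, v, u} : Finset ℕ) ∈ A.E) w) := by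
  simp only [conEdges, bipartiteAbove, card_filter, sum_product]
  exact sum_comm

theorem degQ_eq_card_filter (ε : ℝ) {i j k : Fin M} {v : ℕ} (hv : v ∈ A.P i k) :
    A.degQ ε i j k v = #{w ∈ A.P i j | ε ^ 2 * #(A.P j k) ≤
      #((A.P j k).bipartiteAbove (fun w u => ({w, v, u} : Finset ℕ) ∈ A.E) w)} := by
  refine congrArg card (filter_congr fun w hw => ?_)
  simp [Qadj, bipartiteAbove, hw, hv]

theorem degQrev_eq_card_filter (ε : ℝ) {i j k : Fin M} {v : ℕ} (hv : v ∈ A.P i k) :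
    A.degQrev ε k i j v = #{u ∈ A.P j k | ε ^ 2 * #(A.P i j) ≤
      #((A.P i j).bipartiteBelow (fun w u => ({w, v, u} : Finset ℕ) ∈ A.E) u)} := by
  rw [degQrev, A.P_symm k j]
  refine congrArg card (filter_congr fun u hu => ?_)
  have hvu : ∀ w : ℕ, ({v, u, w} : Finset ℕ) = {w, v, u} := fun w => by
    ext; simp only [mem_insert, mem_singleton]; tauto
  simp [Qadj, bipartiteBelow, A.P_symm k i, A.P_symm k j, hv, hu, hvu]

theorem sum_card_edges_le_degQ_mul_degQrev (ε : ℝ) {i j k : Fin M} {v : ℕ} (hv : v ∈ A.P i k) :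
    ∑ w ∈ A.P i j, (#((A.P j k).bipartiteAbove (fun w u => ({w, v, u} : Finset ℕ) ∈ A.E) w) : ℝ) ≤
      A.degQ ε i j k v * A.degQrev ε k i j v + 2 * ε ^ 2 * #(A.P i j) * #(A.P j k) := by
  have := sum_card_bipartiteAbove_le_card_mul_card_add (fun w u => ({w, v, u} : Finset ℕ) ∈ A.E)
    (A.P i j) (A.P j k) (a := ε ^ 2 * #(A.P j k)) (b := ε ^ 2 * #(A.P i j))
    (by positivity) (by positivity)
  rw [A.degQ_eq_card_filter ε hv, A.degQrev_eq_card_filter ε hv]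
  linarith

end ReducedHypergraph

open ReducedHypergraph in
/-- If `0 < ε ≤ 1/10` and `A` is a `(1/4 + ε, ∨)`-dense reduced hypergraph with
index set `[M]`, then for any `i < j < k`, either
`∑_{v ∈ P^{ik}} d_{Q^i_{jk}}(v)² ≥ (1/4 + ε/2) |P^{ij}|² |P^{ik}|` or
`∑_{v ∈ P^{ik}} d_{Q^k_{ij}}(v)² ≥ (1/4 + ε/2) |P^{jk}|² |P^{ik}|`. -/
theorem sum_deg_squares {M : ℕ} (ε : ℝ) (hε0 : 0 < ε) (hε1 : ε ≤ 1 / 10)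
    (A : ReducedHypergraph M) (hA : A.IsVeeDense (1 / 4 + ε))
    (i j k : Fin M) (hij : i < j) (hjk : j < k) :
    (1 / 4 + ε / 2) * ((A.P i j).card : ℝ) ^ 2 * ((A.P i k).card : ℝ) ≤
        ∑ v ∈ A.P i k, (A.degQ ε i j k v : ℝ) ^ 2 ∨
      (1 / 4 + ε / 2) * ((A.P j k).card : ℝ) ^ 2 * ((A.P i k).card : ℝ) ≤
        ∑ v ∈ A.P i k, (A.degQrev ε k i j v : ℝ) ^ 2 := by
  have hS : 0 < (#(A.P i j) : ℝ) := by exact_mod_cast (A.P_nonempty i j hij.ne).card_pos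
  have hT : 0 < (#(A.P j k) : ℝ) := by exact_mod_cast (A.P_nonempty j k hjk.ne).card_pos
  refine le_sum_sq_or_le_sum_sq_of_le_sum_mul _ _ _ hS hT ?_
  have hedges : ((1 / 4 + ε) * #(A.P i j) * #(A.P i k) * #(A.P j k) : ℝ) ≤
      ∑ v ∈ A.P i k, (A.degQ ε i j k v * A.degQrev ε k i j v +
        2 * ε ^ 2 * #(A.P i j) * #(A.P j k) : ℝ) := by
    refine (hA i j k hij hjk).trans ?_
    rw [card_conEdges_eq_sum]
    push_cast
    exact sum_le_sum fun v hv => A.sum_card_edges_le_degQ_mul_degQrev ε hv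
  rw [sum_add_distrib, sum_const, nsmul_eq_mul] at hedges
  calc (1 / 4 + ε / 2) * #(A.P i j) * #(A.P j k) * #(A.P i k)
      ≤ (1 / 4 + ε - 2 * ε ^ 2) * #(A.P i j) * #(A.P j k) * #(A.P i k) := by
        gcongr ?_ * _ * _ * _
        nlinarith
    _ ≤ _ := by linarith
end

section
/- Let A be a reduced hypergraph with index set [M], let ε, δ > 0 satisfy (1/2+δ)² + δ ≤ 1/4 + ε/2, and let i < j < k in [M] satisfy ∑_{v ∈ P^{ik}} d_{Q^i_{jk}}(v)² ≥ (1/4 + ε/2)·|P^{ij}|²|P^{ik}|. Then |S^i_{jk}(1)| ≥ δ|P^{ik}|. -/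
open scoped Classical

/-! Split the sum of squared degrees at the threshold `t = (1/2 + δ)|P^{ij}|`: a vertex of
`S^i_{jk}(1)` contributes at most `|P^{ij}|²`, any other vertex less than `t²`. Hence
`(1/4 + ε/2)|P^{ij}|²|P^{ik}| ≤ |S|·|P^{ij}|² + (1/2 + δ)²|P^{ij}|²|P^{ik}|`, and the hypothesis
on `ε, δ` leaves `δ|P^{ij}|²|P^{ik}| ≤ |S|·|P^{ij}|²`; cancel `|P^{ij}|² > 0`. -/

theorem Finset.sum_sq_le_card_filter_mul_sq_add {α : Type*} (s : Finset α) (f : α → ℝ)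
    (n t : ℝ) (hf₀ : ∀ x ∈ s, 0 ≤ f x) (hfn : ∀ x ∈ s, f x ≤ n) :
    ∑ x ∈ s, f x ^ 2 ≤ (s.filter (fun x => t ≤ f x)).card * n ^ 2 + s.card * t ^ 2 := by
  rw [← Finset.sum_filter_add_sum_filter_not s (fun x => t ≤ f x)]
  gcongr
  · refine (Finset.sum_le_card_nsmul _ _ _ fun x hx => ?_).trans_eq (nsmul_eq_mul _ _)
    have hxs := Finset.mem_of_mem_filter x hx
    exact pow_le_pow_left₀ (hf₀ x hxs) (hfn x hxs) 2
  · calc ∑ x ∈ s.filter (fun x => ¬t ≤ f x), f x ^ 2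
        ≤ (s.filter (fun x => ¬t ≤ f x)).card • t ^ 2 := by
          refine Finset.sum_le_card_nsmul _ _ _ fun x hx => ?_
          obtain ⟨hxs, hlt⟩ := Finset.mem_filter.mp hx
          exact pow_le_pow_left₀ (hf₀ x hxs) (not_le.mp hlt).le 2
      _ ≤ s.card * t ^ 2 := by
          rw [nsmul_eq_mul]
          gcongr
          exact s.filter_subset _

namespace ReducedHypergraph

variable {M : ℕ}

theorem card_P_pos (A : ReducedHypergraph M) {i j : Fin M} (hij : i ≠ j) :
    0 < (A.P i j).card :=
  (A.P_nonempty i j hij).card_pos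

theorem degQ_le_card (A : ReducedHypergraph M) (ε : ℝ) (a b c : Fin M) (v : ℕ) :
    A.degQ ε a b c v ≤ (A.P a b).card :=
  Finset.card_filter_le _ _

theorem Sset_one_eq_filter (A : ReducedHypergraph M) (ε δ : ℝ) (i j k : Fin M) :
    A.Sset ε δ i j k 1 =
      (A.P i k).filter (fun x => (1 / 2 + δ) * ((A.P i j).card : ℝ) ≤ A.degQ ε i j k x) := by
  simp only [Sset, Nat.cast_one, one_mul]

theorem sum_sq_degQ_le (A : ReducedHypergraph M) (ε δ : ℝ) (i j k : Fin M) :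
    ∑ v ∈ A.P i k, (A.degQ ε i j k v : ℝ) ^ 2 ≤
      (A.Sset ε δ i j k 1).card * ((A.P i j).card : ℝ) ^ 2 +
        (A.P i k).card * ((1 / 2 + δ) * (A.P i j).card) ^ 2 := by
  rw [Sset_one_eq_filter]
  exact Finset.sum_sq_le_card_filter_mul_sq_add _ (fun v => (A.degQ ε i j k v : ℝ)) _ _
    (fun _ _ => Nat.cast_nonneg _)
    (fun v _ => by exact_mod_cast A.degQ_le_card ε i j k v)

end ReducedHypergraph

open ReducedHypergraph in
theorem Sset_one_large_general {M : ℕ} (A : ReducedHypergraph M) (ε δ : ℝ)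
    (hcond : (1 / 2 + δ) ^ 2 + δ ≤ 1 / 4 + ε / 2)
    (i j k : Fin M) (hij : i < j)
    (hsum : (1 / 4 + ε / 2) * ((A.P i j).card : ℝ) ^ 2 * ((A.P i k).card : ℝ) ≤
      ∑ v ∈ A.P i k, (A.degQ ε i j k v : ℝ) ^ 2) :
    δ * ((A.P i k).card : ℝ) ≤ ((A.Sset ε δ i j k 1).card : ℝ) := by
  have hn : (0 : ℝ) < ((A.P i j).card : ℝ) ^ 2 := by
    have := A.card_P_pos hij.ne
    positivity
  have hcond' := mul_le_mul_of_nonneg_right hcond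
    (mul_nonneg hn.le (Nat.cast_nonneg (A.P i k).card))
  refine le_of_mul_le_mul_right ?_ hn
  linarith [A.sum_sq_degQ_le ε δ i j k]

open ReducedHypergraph in
/-- If `ε, δ > 0` satisfy `(1/2 + δ)² + δ ≤ 1/4 + ε/2` and `i < j < k` satisfy
`∑_{v ∈ P^{ik}} d_{Q^i_{jk}}(v)² ≥ (1/4 + ε/2) |P^{ij}|² |P^{ik}|`, then
`|S^i_{jk}(1)| ≥ δ |P^{ik}|`. -/
theorem Sset_one_large {M : ℕ} (A : ReducedHypergraph M) (ε δ : ℝ)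
    (hε : 0 < ε) (hδ : 0 < δ)
    (hcond : (1 / 2 + δ) ^ 2 + δ ≤ 1 / 4 + ε / 2)
    (i j k : Fin M) (hij : i < j) (hjk : j < k)
    (hsum : (1 / 4 + ε / 2) * ((A.P i j).card : ℝ) ^ 2 * ((A.P i k).card : ℝ) ≤
      ∑ v ∈ A.P i k, (A.degQ ε i j k v : ℝ) ^ 2) :
    δ * ((A.P i k).card : ℝ) ≤ ((A.Sset ε δ i j k 1).card : ℝ) :=
  Sset_one_large_general A ε δ hcond i j k hij hsum
end

section
/- Let ε, δ > 0 with 100δ ≤ ε ≤ 1/10, let r* ∈ ℕ with 1 ≤ r* ≤ 1/(2δ), and let A be a reduced hypergraph with index set [m] satisfying condition (⋆) for parameters ε, δ, r*. Then for any i < j₁ < j₂ < k in [m] and any x ∈ S^i_{j₁k}(r*) ∩ S^i_{j₂k}(r*), there are at least δ|P^{ij₁}||P^{ij₂}| triangles xyz in Q^i with y ∈ P^{ij₂} and z ∈ P^{ij₁}. -/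
/-!
Write `p = |P^{ij₁}|`, `β = r*δ` and `d(y)` for the degree of `y ∈ P^{ij₂}` in `Q^i_{j₁j₂}`.
As `x` has at least `(1/2 + β)p` neighbours in `P^{ij₁}`, a neighbour `y` of `x` in
`P^{ij₂}` lies in `c(y) ≥ d(y) - (1/2 - β)p` triangles through `x`, hence
`d(y)² ≤ (1 + δ)p·c(y) + (1/2 - β)²p²` whenever `d(y) < (1/2 + β + δ)p`. The vertices of
larger degree form `S^i_{j₁j₂}(r* + 1)`, which has fewer than `δ|P^{ij₂}|` elements, and
every other vertex has `d(y)² < (1/2 + β + δ)²p²`. Summing over `y` and comparing with the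
lower bound `(1/4 + ε/2)p²|P^{ij₂}|` on `∑ d(y)²` from (⋆) forces at least `δp|P^{ij₂}|`
triangles.
-/

open scoped Classical

open Finset

section Triangles

variable {α γ : Type*} (s : Finset α) (t : Finset γ)

theorem card_filter_product_eq_sum (f : α × γ → Prop) [DecidablePred f] :
    #((s ×ˢ t).filter f) = ∑ y ∈ s, #(t.filter fun z => f (y, z)) := by
  simp only [card_filter, sum_product]

theorem card_filter_add_card_filter_le (q r : γ → Prop) :
    #(t.filter q) + #(t.filter r) ≤ #t + #(t.filter fun z => q z ∧ r z) := by
  rw [filter_and, ← card_union_add_card_inter]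
  gcongr
  exact union_subset (filter_subset _ _) (filter_subset _ _)

theorem sq_le_add_mul_add_sq {a b c d : ℝ} (ha : 0 ≤ a) (hd : 0 ≤ d) (hdb : d ≤ b)
    (hc : 0 ≤ c) (hdc : d - a ≤ c) : d ^ 2 ≤ (a + b) * c + a ^ 2 := by
  nlinarith

variable (P : α → Prop) (q : γ → Prop) (r : α → γ → Prop)

/- The last summand is `#t²`, `a²` or `b²` according as `b ≤ #(t.filter (r y))`, or else `P y`
holds or fails (it exceeds `#t²` in the first case if `¬ P y`); in this form its sum over `s` is a
combination of two cardinalities. -/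
theorem sq_card_filter_le {a b : ℝ} (ha : 0 ≤ a) (hab : a ≤ b) (hq : #t - a ≤ #(t.filter q))
    (y : α) :
    (#(t.filter (r y)) : ℝ) ^ 2 ≤ (a + b) * #(t.filter fun z => P y ∧ q z ∧ r y z) +
      (b ^ 2 + (if b ≤ #(t.filter (r y)) then (#t : ℝ) ^ 2 - a ^ 2 else 0) -
        (if P y then b ^ 2 - a ^ 2 else 0)) := by
  have hdt : (#(t.filter (r y)) : ℝ) ≤ #t := by exact_mod_cast card_filter_le _ _
  have hc : (0 : ℝ) ≤ #(t.filter fun z => P y ∧ q z ∧ r y z) := by positivity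
  have hab2 : a ^ 2 ≤ b ^ 2 := by gcongr
  by_cases hH : b ≤ #(t.filter (r y))
  · have : a ^ 2 ≤ (#t : ℝ) ^ 2 := by nlinarith
    split_ifs <;> nlinarith
  by_cases hP : P y
  · have hcodeg :
        (#(t.filter (r y)) : ℝ) - a ≤ #(t.filter fun z => P y ∧ q z ∧ r y z) := by
      have h : (#(t.filter q) + #(t.filter (r y)) : ℝ) ≤
          #t + #(t.filter fun z => q z ∧ r y z) := by
        exact_mod_cast card_filter_add_card_filter_le t q (r y)
      simp only [hP, true_and]
      linarith
    rw [if_neg hH, if_pos hP]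
    nlinarith [sq_le_add_mul_add_sq ha (by positivity) (not_le.mp hH).le hc hcodeg]
  · rw [if_neg hH, if_neg hP]
    nlinarith [(not_le.mp hH).le]

theorem sum_sq_card_filter_le {a b : ℝ} (ha : 0 ≤ a) (hab : a ≤ b)
    (hq : #t - a ≤ #(t.filter q)) :
    ∑ y ∈ s, (#(t.filter (r y)) : ℝ) ^ 2 ≤
      (a + b) * #((s ×ˢ t).filter fun yz => P yz.1 ∧ q yz.2 ∧ r yz.1 yz.2) +
        (#s * b ^ 2 + #(s.filter fun y => b ≤ #(t.filter (r y))) * ((#t : ℝ) ^ 2 - a ^ 2) -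
          #(s.filter P) * (b ^ 2 - a ^ 2)) := by
  calc _ ≤ ∑ y ∈ s, ((a + b) * #(t.filter fun z => P y ∧ q z ∧ r y z) +
          (b ^ 2 + (if b ≤ #(t.filter (r y)) then (#t : ℝ) ^ 2 - a ^ 2 else 0) -
            (if P y then b ^ 2 - a ^ 2 else 0))) :=
        sum_le_sum fun y _ => sq_card_filter_le t P q r ha hab hq y
    _ = _ := by
      rw [sum_add_distrib, ← mul_sum, sum_sub_distrib, sum_add_distrib, ← sum_filter,
        ← sum_filter, card_filter_product_eq_sum]
      simp only [sum_const, nsmul_eq_mul, Nat.cast_sum]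

theorem le_card_filter_product_of_sum_sq_le {β δ ε : ℝ} (hδ : 0 < δ) (hδβ : δ ≤ β)
    (hβ : β ≤ 1 / 2) (hδε : 6 * δ ≤ ε) (hq : (1 / 2 + β) * #t ≤ #(t.filter q))
    (hP : (1 / 2 + β) * #s ≤ #(s.filter P))
    (hH : #(s.filter fun y => (1 / 2 + β + δ) * #t ≤ #(t.filter (r y))) < δ * #s)
    (hsq : (1 / 4 + ε / 2) * (#t : ℝ) ^ 2 * #s ≤ ∑ y ∈ s, (#(t.filter (r y)) : ℝ) ^ 2) :
    δ * #t * #s ≤ #((s ×ˢ t).filter fun yz => P yz.1 ∧ q yz.2 ∧ r yz.1 yz.2) := by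
  set p : ℝ := (#t : ℝ)
  set m : ℝ := (#s : ℝ)
  set T : ℝ := (#((s ×ˢ t).filter fun yz => P yz.1 ∧ q yz.2 ∧ r yz.1 yz.2) : ℝ)
  have hp : 0 ≤ p := by positivity
  have hm : 0 ≤ m := by positivity
  have ha : 0 ≤ (1 / 2 - β) * p := mul_nonneg (by linarith) hp
  have hab : (1 / 2 - β) * p ≤ (1 / 2 + β + δ) * p := by gcongr; linarith
  have hsum := sum_sq_card_filter_le s t P q r ha hab (by linarith)
  -- the right-hand side of `hsum` divided by `p² m`, once `hH` and `hP` bound the cardinalities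
  have hcoeff : δ * (1 + δ) + (1 / 2 + β + δ) ^ 2 + δ * (1 - (1 / 2 - β) ^ 2) -
      (1 / 2 + β) * ((1 / 2 + β + δ) ^ 2 - (1 / 2 - β) ^ 2) ≤ 1 / 4 + ε / 2 := by
    nlinarith [mul_nonneg hδ.le (sq_nonneg β),
      mul_nonneg (mul_nonneg hδ.le hδ.le) (by linarith : (0 : ℝ) ≤ 1 / 2 - β)]
  have hHm := mul_le_mul_of_nonneg_right hH.le
    (sub_nonneg.mpr (pow_le_pow_left₀ ha (by nlinarith : (1 / 2 - β) * p ≤ p) 2))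
  have hPm := mul_le_mul_of_nonneg_right hP
    (sub_nonneg.mpr (pow_le_pow_left₀ ha hab 2))
  have hmain : (1 + δ) * p * (δ * p * m) ≤ (1 + δ) * p * T := by
    nlinarith [mul_le_mul_of_nonneg_right hcoeff (mul_nonneg (sq_nonneg p) hm)]
  rcases hp.eq_or_lt with hp0 | hp0
  · rw [← hp0]; simp only [mul_zero, zero_mul]; positivity
  · exact le_of_mul_le_mul_left hmain (by positivity)

end Triangles

open ReducedHypergraph in
theorem many_triangles_general {m : ℕ} (ε δ : ℝ) (hδ : 0 < δ)
    (hδε : 100 * δ ≤ ε)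
    (rstar : ℕ) (hr1 : 1 ≤ rstar) (hr2 : (rstar : ℝ) ≤ 1 / (2 * δ))
    (A : ReducedHypergraph m) (hstar : A.StarCond ε δ rstar)
    (i j1 j2 k : Fin m) (h1 : i < j1) (h2 : j1 < j2)
    (x : ℕ) (hx : x ∈ A.Sset ε δ i j1 k rstar ∩ A.Sset ε δ i j2 k rstar) :
    δ * ((A.P i j1).card : ℝ) * ((A.P i j2).card : ℝ) ≤
      ((((A.P i j2) ×ˢ (A.P i j1)).filter (fun p =>
        A.Qadj ε i j2 k p.1 x ∧ A.Qadj ε i j1 k p.2 x ∧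
          A.Qadj ε i j1 j2 p.2 p.1)).card : ℝ) := by
  obtain ⟨hx1, hx2⟩ := mem_inter.mp hx
  obtain ⟨hsq, -, hH⟩ := hstar i j1 j2 h1 h2
  have hδβ : δ ≤ rstar * δ := le_mul_of_one_le_left hδ.le (by exact_mod_cast hr1)
  have hβ : (rstar : ℝ) * δ ≤ 1 / 2 := by
    rw [le_div_iff₀ (by positivity)] at hr2
    linarith
  have hthreshold : (1 / 2 + ((rstar + 1 : ℕ) : ℝ) * δ) = 1 / 2 + rstar * δ + δ := by
    push_cast; ring
  rw [Sset, hthreshold] at hH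
  exact le_card_filter_product_of_sum_sq_le (A.P i j2) (A.P i j1) (A.Qadj ε i j2 k · x)
    (A.Qadj ε i j1 k · x) (fun y z => A.Qadj ε i j1 j2 z y) hδ hδβ hβ (by linarith)
    (mem_filter.mp hx1).2 (mem_filter.mp hx2).2 hH hsq

open ReducedHypergraph in
/-- Lemma (many triangles): let `ε, δ > 0` with `100δ ≤ ε ≤ 1/10`, let
`1 ≤ r* ≤ 1/(2δ)`, and let `A` be a reduced hypergraph with index set `[m]`
satisfying condition (⋆). Then for any `i < j₁ < j₂ < k` and any
`x ∈ S^i_{j₁k}(r*) ∩ S^i_{j₂k}(r*)`, there are at least `δ |P^{ij₁}| |P^{ij₂}|`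
triangles `x y z` in `Q^i` with `y ∈ P^{ij₂}` and `z ∈ P^{ij₁}`. -/
theorem many_triangles {m : ℕ} (ε δ : ℝ) (hδ : 0 < δ)
    (hδε : 100 * δ ≤ ε) (hε : ε ≤ 1 / 10)
    (rstar : ℕ) (hr1 : 1 ≤ rstar) (hr2 : (rstar : ℝ) ≤ 1 / (2 * δ))
    (A : ReducedHypergraph m) (hstar : A.StarCond ε δ rstar)
    (i j1 j2 k : Fin m) (h1 : i < j1) (h2 : j1 < j2) (h3 : j2 < k)
    (x : ℕ) (hx : x ∈ A.Sset ε δ i j1 k rstar ∩ A.Sset ε δ i j2 k rstar) :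
    δ * ((A.P i j1).card : ℝ) * ((A.P i j2).card : ℝ) ≤
      ((((A.P i j2) ×ˢ (A.P i j1)).filter (fun p =>
        A.Qadj ε i j2 k p.1 x ∧ A.Qadj ε i j1 k p.2 x ∧
          A.Qadj ε i j1 j2 p.2 p.1)).card : ℝ) :=
  many_triangles_general ε δ hδ hδε rstar hr1 hr2 A hstar i j1 j2 k h1 h2 x hx
end
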